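/- (Polynomial identity from the proof of Corollary on the fixed data of four fixed points, the case m = 1.) In R = MvPolynomial (Fin k) (ZMod 2), writing ∏M for the product of all elements of a multiset M, the following identity holds: (∏E)·(∏H)·(∏Λ) + (∏Γ)·(∏Δ)·(∏Λ) + (∏B)·(∏Δ)·(∏H) + (∏B)·(∏Γ)·(∏E) = 0. -/

import Mathlib

/-!
Over a commutative ring of characteristic 2, `E t = ∏ (t + ∑ i ∈ S, v i)` over the even subsets
`S ⊆ G` is additive in `t` (a linearized polynomial), and the same product over the odd subsets is
`E (t + v a)` for any `a ∈ G`, because `S ↦ S ∆ {a}` swaps the parities. Taking `v = X` and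
`G = {0, …, k - 3}`, and writing `a = E y`, `b = E z`, `c = E X₀`, this gives `∏B = c`, `∏Γ = a`,
`∏Δ = b`, `∏E = a + c`, `∏H = b + c`, `∏Λ = a + b`; in these terms the identity has only even
integer coefficients.
-/

open MvPolynomial Finset

theorem Finset.prod_powerset_insert_filter {α β : Type*} [DecidableEq α] [CommMonoid β]
    {s : Finset α} {a : α} (ha : a ∉ s) (p : Finset α → Prop) [DecidablePred p]
    (f : Finset α → β) :
    ∏ t ∈ (insert a s).powerset with p t, f t =
      (∏ t ∈ s.powerset with p t, f t) * ∏ t ∈ s.powerset with p (insert a t), f (insert a t) := by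
  simp only [prod_filter]
  exact prod_powerset_insert ha _

section SubsetSumProd

variable {ι R : Type*} [CommRing R] (v : ι → R)

noncomputable def evenSubsetSumProd (G : Finset ι) (t : R) : R :=
  ∏ S ∈ G.powerset with Even #S, (t + ∑ i ∈ S, v i)

noncomputable def oddSubsetSumProd (G : Finset ι) (t : R) : R :=
  ∏ S ∈ G.powerset with Odd #S, (t + ∑ i ∈ S, v i)

@[simp]
theorem evenSubsetSumProd_empty (t : R) : evenSubsetSumProd v ∅ t = t := by
  simp [evenSubsetSumProd, filter_singleton]

@[simp]
theorem oddSubsetSumProd_empty (t : R) : oddSubsetSumProd v ∅ t = 1 := by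
  simp [oddSubsetSumProd, filter_singleton]

variable [DecidableEq ι] {G : Finset ι} {a : ι}

theorem evenSubsetSumProd_insert (ha : a ∉ G) (t : R) :
    evenSubsetSumProd v (insert a G) t =
      evenSubsetSumProd v G t * oddSubsetSumProd v G (t + v a) := by
  rw [evenSubsetSumProd, prod_powerset_insert_filter ha, oddSubsetSumProd]
  congr 1
  rw [prod_filter, prod_filter]
  refine prod_congr rfl fun S hS => ?_
  have haS : a ∉ S := fun h => ha (mem_powerset.1 hS h)
  simp only [card_insert_of_notMem haS, sum_insert haS, Nat.even_add_one, Nat.not_even_iff_odd,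
    add_assoc]

theorem oddSubsetSumProd_insert (ha : a ∉ G) (t : R) :
    oddSubsetSumProd v (insert a G) t =
      oddSubsetSumProd v G t * evenSubsetSumProd v G (t + v a) := by
  rw [oddSubsetSumProd, prod_powerset_insert_filter ha, evenSubsetSumProd]
  congr 1
  rw [prod_filter, prod_filter]
  refine prod_congr rfl fun S hS => ?_
  have haS : a ∉ S := fun h => ha (mem_powerset.1 hS h)
  simp only [card_insert_of_notMem haS, sum_insert haS, Nat.odd_add_one, Nat.not_odd_iff_even,
    add_assoc]

variable [CharP R 2]

theorem oddSubsetSumProd_eq_evenSubsetSumProd_add (ha : a ∈ G) (t : R) :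
    oddSubsetSumProd v G t = evenSubsetSumProd v G (t + v a) := by
  rw [← insert_erase ha, oddSubsetSumProd_insert v (notMem_erase a G),
    evenSubsetSumProd_insert v (notMem_erase a G), add_assoc, CharTwo.add_self_eq_zero, add_zero,
    mul_comm]

theorem evenSubsetSumProd_add (G : Finset ι) (u w : R) :
    evenSubsetSumProd v G (u + w) = evenSubsetSumProd v G u + evenSubsetSumProd v G w := by
  induction G using Finset.induction_on generalizing u w with
  | empty => simp
  | insert a G ha ih =>
    rcases G.eq_empty_or_nonempty with rfl | ⟨b, hb⟩
    · simp only [evenSubsetSumProd_insert v ha, evenSubsetSumProd_empty, oddSubsetSumProd_empty,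
        mul_one]
    -- `E (insert a G) t = E t * (E t + E (v a + v b))`: a square plus a multiple of `E t`.
    have hE : ∀ t, evenSubsetSumProd v (insert a G) t =
        evenSubsetSumProd v G t ^ 2 +
          evenSubsetSumProd v G (v a + v b) * evenSubsetSumProd v G t := by
      intro t
      rw [evenSubsetSumProd_insert v ha, oddSubsetSumProd_eq_evenSubsetSumProd_add v hb, add_assoc,
        ih]
      ring
    rw [hE, hE, hE, ih, CharTwo.add_sq]
    ring

end SubsetSumProd

theorem four_fixed_points_polynomial_identity (k : ℕ) (hk : 3 ≤ k)
    (y z : MvPolynomial (Fin k) (ZMod 2))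
    (B Γm Δm Em Hm Λm : Multiset (MvPolynomial (Fin k) (ZMod 2)))
    (hB : B = (Finset.univ.filter
        (fun S : Finset (Fin k) => Odd S.card ∧ ∀ i ∈ S, (i : ℕ) < k - 2)).val.map
        (fun S => ∑ i ∈ S, X i))
    (hΓ : Γm = B.map (fun b => y + X ⟨0, by omega⟩ + b))
    (hΔ : Δm = B.map (fun b => z + X ⟨0, by omega⟩ + b))
    (hE : Em = B.map (fun b => y + b))
    (hH : Hm = B.map (fun b => z + b))
    (hΛ : Λm = B.map (fun b => y + z + X ⟨0, by omega⟩ + b))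
    :
    Em.prod * Hm.prod * Λm.prod + Γm.prod * Δm.prod * Λm.prod
      + B.prod * Δm.prod * Hm.prod + B.prod * Γm.prod * Em.prod = 0 := by
  set G : Finset (Fin k) := {i | (i : ℕ) < k - 2}
  have hG : ({S : Finset (Fin k) | Odd #S ∧ ∀ i ∈ S, (i : ℕ) < k - 2} : Finset _) =
      {S ∈ G.powerset | Odd #S} := by
    ext S
    simp [G, subset_iff, and_comm]
  have h0 : (⟨0, by omega⟩ : Fin k) ∈ G := by simp [G]; omega
  set x₀ : MvPolynomial (Fin k) (ZMod 2) := X ⟨0, by omega⟩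
  have hprod : ∀ t, (B.map (t + ·)).prod = evenSubsetSumProd X G (t + x₀) := by
    intro t
    rw [hB, Multiset.map_map, prod_map_val, hG, ← oddSubsetSumProd_eq_evenSubsetSumProd_add X h0]
    rfl
  have hBprod : B.prod = evenSubsetSumProd X G x₀ := by
    simpa using hprod 0
  rw [hΓ, hΔ, hE, hH, hΛ, hprod, hprod, hprod, hprod, hprod, hBprod]
  simp only [evenSubsetSumProd_add, add_assoc, CharTwo.add_self_eq_zero, add_zero]
  generalize evenSubsetSumProd X G y = a, evenSubsetSumProd X G z = b,
    evenSubsetSumProd X G x₀ = c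
  linear_combination
    (a ^ 2 * b + a * b ^ 2 + a ^ 2 * c + b ^ 2 * c + a * c ^ 2 + b * c ^ 2 + a * b * c) *
    (CharTwo.two_eq_zero : (2 : MvPolynomial (Fin k) (ZMod 2)) = 0)
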